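/- arXiv:2103.04913 — 6 statements merged into one kernel-verified Lean document; each statement's English description precedes it below -/
import Mathlib

section
/- Let E be a complex inner product space, let A B : E →L[ℂ] E be self-adjoint continuous linear operators, and let ψ ∈ E with ‖ψ‖ = 1. Write ⟨A⟩ = Re ⟪A ψ, ψ⟫ and σ_A² = ‖A ψ‖² − ⟨A⟩², and similarly for B. Then σ_A² · σ_B² ≥ (Re ⟪A ψ, B ψ⟫ − ⟨A⟩·⟨B⟩)² + (Im ⟪A ψ, B ψ⟫)². (Robertson–Schrödinger uncertainty relation: the variances of two self-adjoint observables in a pure state dominate the squared covariance plus the squared commutator expectation.) -/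
/-!
Centre the observables: with `u = A ψ - ⟨A⟩ ψ` and `v = B ψ - ⟨B⟩ ψ` one has `‖u‖² = σ_A²`,
`‖v‖² = σ_B²` and `⟪u, v⟫ = ⟪A ψ, B ψ⟫ - ⟨A⟩⟨B⟩`, whose squared modulus is the right-hand side.
The relation is then Cauchy–Schwarz for `u` and `v`.
-/

open scoped InnerProductSpace

section UnitVector

variable {𝕜 E : Type*} [RCLike 𝕜] [NormedAddCommGroup E] [InnerProductSpace 𝕜 E]
  {ψ : E}

lemma inner_sub_inner_smul_sub_inner_smul (hψ : ‖ψ‖ = 1) (x y : E) :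
    ⟪x - ⟪ψ, x⟫_𝕜 • ψ, y - ⟪ψ, y⟫_𝕜 • ψ⟫_𝕜 = ⟪x, y⟫_𝕜 - ⟪x, ψ⟫_𝕜 * ⟪ψ, y⟫_𝕜 := by
  have hψψ : ⟪ψ, ψ⟫_𝕜 = 1 := by simp [inner_self_eq_norm_sq_to_K, hψ]
  simp only [inner_sub_left, inner_sub_right, inner_smul_left, inner_smul_right, hψψ,
    inner_conj_symm]
  ring

lemma norm_sub_inner_smul_sq (hψ : ‖ψ‖ = 1) (x : E) :
    ‖x - ⟪ψ, x⟫_𝕜 • ψ‖ ^ 2 = ‖x‖ ^ 2 - ‖⟪ψ, x⟫_𝕜‖ ^ 2 := by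
  have h := congrArg RCLike.re (inner_sub_inner_smul_sub_inner_smul (𝕜 := 𝕜) hψ x x)
  rwa [inner_self_eq_norm_sq, map_sub, inner_self_eq_norm_sq, ← inner_conj_symm x ψ,
    RCLike.conj_mul, ← RCLike.ofReal_pow, RCLike.ofReal_re] at h

/-- Cauchy–Schwarz on the orthogonal complement of the unit vector `ψ`. -/
lemma norm_inner_sub_inner_mul_inner_sq_le (hψ : ‖ψ‖ = 1) (x y : E) :
    ‖⟪x, y⟫_𝕜 - ⟪x, ψ⟫_𝕜 * ⟪ψ, y⟫_𝕜‖ ^ 2 ≤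
      (‖x‖ ^ 2 - ‖⟪ψ, x⟫_𝕜‖ ^ 2) * (‖y‖ ^ 2 - ‖⟪ψ, y⟫_𝕜‖ ^ 2) := by
  rw [← inner_sub_inner_smul_sub_inner_smul hψ, ← norm_sub_inner_smul_sq hψ,
    ← norm_sub_inner_smul_sq hψ, ← mul_pow]
  gcongr
  exact norm_inner_le_norm _ _

end UnitVector

/-- Robertson–Schrödinger uncertainty relation. -/
theorem stmt_1 {E : Type*} [NormedAddCommGroup E] [InnerProductSpace ℂ E]
    (A B : E →L[ℂ] E)
    (hA : ∀ x y : E, ⟪A x, y⟫_ℂ = ⟪x, A y⟫_ℂ)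
    (hB : ∀ x y : E, ⟪B x, y⟫_ℂ = ⟪x, B y⟫_ℂ)
    (ψ : E) (hψ : ‖ψ‖ = 1) :
    (‖A ψ‖ ^ 2 - (⟪A ψ, ψ⟫_ℂ).re ^ 2) * (‖B ψ‖ ^ 2 - (⟪B ψ, ψ⟫_ℂ).re ^ 2) ≥
      ((⟪A ψ, B ψ⟫_ℂ).re - (⟪A ψ, ψ⟫_ℂ).re * (⟪B ψ, ψ⟫_ℂ).re) ^ 2 +
        (⟪A ψ, B ψ⟫_ℂ).im ^ 2 := by
  set a := (⟪A ψ, ψ⟫_ℂ).re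
  set b := (⟪B ψ, ψ⟫_ℂ).re
  have ha : ⟪A ψ, ψ⟫_ℂ = a := (LinearMap.IsSymmetric.coe_reApplyInnerSelf_apply hA ψ).symm
  have hb : ⟪B ψ, ψ⟫_ℂ = b := (LinearMap.IsSymmetric.coe_reApplyInnerSelf_apply hB ψ).symm
  have ha' : ⟪ψ, A ψ⟫_ℂ = a := by rw [← hA, ha]
  have hb' : ⟪ψ, B ψ⟫_ℂ = b := by rw [← hB, hb]
  have hCS := norm_inner_sub_inner_mul_inner_sq_le (𝕜 := ℂ) hψ (A ψ) (B ψ)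
  rw [ha, hb', ha', ← Complex.ofReal_mul, Complex.sq_norm, Complex.normSq_apply] at hCS
  simpa [Complex.norm_real, sq_abs, ← sq] using hCS
end

section
/- Let 𝔸 be a complex Banach algebra with unit, let n : ℕ, let r : Fin n → 𝔸, let a ∈ 𝔸, and let M be an n×n complex matrix such that for every i, a * (r i) − (r i) * a = ∑_j M i j • r j. Then for every i, exp(a) * (r i) * exp(−a) = ∑_j (exp M) i j • r j, where exp M is the matrix exponential. (If the adjoint action of a preserves the span of the r i and acts there by the matrix M, then conjugation by exp(a) acts by exp(M).) -/
/-!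
Stack the `r i` into the matrix `R = replicateCol r` over `𝔸` and let `A` be the scalar matrix
`a • 1`. The hypothesis reads `A R - R A = M R`, with `M` viewed in `Matrix m m 𝔸`, where it
commutes with `A`. So `R` intertwines `-A` with `M - A`, and exponentiating this relation gives
`exp A * R * exp (-A) = exp M * R`; the diagonal entries of this matrix identity are the claim.
-/

open NormedSpace Matrix

theorem exp_mul_mul_exp_neg_of_commute {B : Type*} [NormedRing B] [NormedAlgebra ℚ B]
    [CompleteSpace B] {a n x : B} (hn : Commute a n) (h : a * x - x * a = n * x) :
    exp a * x * exp (-a) = exp n * x := by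
  have hsemi : SemiconjBy x (-a) (n - a) := by
    rw [SemiconjBy, sub_mul, ← h]; noncomm_ring
  have key : exp (-n) * exp a * x * exp (-a) = x := by
    rw [← exp_add_of_commute hn.symm.neg_left, neg_add_eq_sub, ← neg_sub]
    exact hsemi.exp_neg_mul_mul_exp_eq_self
  have hinv : exp n * exp (-n) = 1 := by
    rw [← exp_add_of_commute (Commute.refl n).neg_right, add_neg_cancel, exp_zero]
  calc exp a * x * exp (-a) = exp n * exp (-n) * exp a * x * exp (-a) := by rw [hinv, one_mul]
    _ = exp n * (exp (-n) * exp a * x * exp (-a)) := by simp only [mul_assoc]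
    _ = exp n * x := by rw [key]

namespace Matrix

variable {m : Type*} [Fintype m] [DecidableEq m]

theorem commute_scalar_map_algebraMap {R 𝔸 : Type*} [CommSemiring R] [Semiring 𝔸]
    [Algebra R 𝔸] (a : 𝔸) (M : Matrix m m R) :
    Commute (scalar m a) (M.map (algebraMap R 𝔸)) := by
  ext i j
  simp [Algebra.commutes]

theorem exp_map_algebraMap {𝕂 𝔸 : Type*} [RCLike 𝕂] [NormedRing 𝔸] [NormedAlgebra 𝕂 𝔸]
    (M : Matrix m m 𝕂) : exp (M.map (algebraMap 𝕂 𝔸)) = (exp M).map (algebraMap 𝕂 𝔸) := by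
  let _ : NormedAlgebra ℚ 𝔸 := .restrictScalars ℚ 𝕂 𝔸
  open scoped Norms.Operator in
  exact (map_exp (algebraMap 𝕂 𝔸).mapMatrix
    (continuous_id.matrix_map (continuous_algebraMap 𝕂 𝔸)) M).symm

end Matrix

theorem exp_mul_mul_exp_neg_eq_sum_smul {𝕂 𝔸 m : Type*} [RCLike 𝕂] [NormedRing 𝔸]
    [NormedAlgebra 𝕂 𝔸] [CompleteSpace 𝔸] [Fintype m] [DecidableEq m] (r : m → 𝔸) (a : 𝔸)
    (M : Matrix m m 𝕂) (h : ∀ i, a * r i - r i * a = ∑ j, M i j • r j) (i : m) :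
    exp a * r i * exp (-a) = ∑ j, exp M i j • r j := by
  let _ : NormedAlgebra ℚ 𝔸 := .restrictScalars ℚ 𝕂 𝔸
  have hR : scalar m a * replicateCol m r - replicateCol m r * scalar m a =
      M.map (algebraMap 𝕂 𝔸) * replicateCol m r := by
    ext i j
    rw [Matrix.sub_apply, scalar_apply, diagonal_mul, mul_diagonal, mul_apply]
    simp [h, Algebra.smul_def]
  have key : exp (scalar m a) * replicateCol m r * exp (-scalar m a) =
      exp (M.map (algebraMap 𝕂 𝔸)) * replicateCol m r := by
    open scoped Norms.Operator in
    -- the operator-norm uniformity is the product one only up to unfolding, so instance search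
    -- cannot find completeness by itself
    exact @exp_mul_mul_exp_neg_of_commute _ _ _ (Matrix.instCompleteSpace m m 𝔸) _ _ _
      (commute_scalar_map_algebraMap a M) hR
  have hii := congrFun₂ key i i
  rw [← map_neg, scalar_apply, scalar_apply, exp_diagonal, exp_diagonal, exp_map_algebraMap,
    mul_diagonal, diagonal_mul, Pi.exp_def, Pi.exp_def, replicateCol_apply, mul_apply] at hii
  simpa [Algebra.smul_def] using hii

/-- If `ad a` acts on the span of the `r i` by the matrix `M`, then conjugation by
`exp a` acts by the matrix exponential `exp M`. -/
theorem stmt_4 {𝔸 : Type*} [NormedRing 𝔸] [NormedAlgebra ℂ 𝔸] [CompleteSpace 𝔸]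
    (n : ℕ) (r : Fin n → 𝔸) (a : 𝔸) (M : Matrix (Fin n) (Fin n) ℂ)
    (h : ∀ i, a * r i - r i * a = ∑ j, M i j • r j) :
    ∀ i, NormedSpace.exp a * r i * NormedSpace.exp (-a) =
      ∑ j, (NormedSpace.exp M) i j • r j :=
  exp_mul_mul_exp_neg_eq_sum_smul r a M h
end

section
/- Let 𝔸 be a complex Banach algebra with unit and let a, b ∈ 𝔸. Define the adjoint map ad_a : 𝔸 → 𝔸 by ad_a(x) = a*x − x*a. Then the series ∑_{n=0}^∞ (1/n!) • ad_a^[n](b) (where ad_a^[n] denotes the n-fold iterate) converges and its sum equals exp(a) * b * exp(−a). (Baker–Campbell–Hausdorff conjugation formula: e^{a} b e^{−a} = b + [a,b] + ½[a,[a,b]] + ⋯.) -/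
/-!
Write `ad_a = L_a + R_{-a}`, where `L_a x = a * x` and `R_c x = x * c` are bounded operators on `𝔸`.
The sum is the exponential series of `ad_a` in the Banach algebra `𝔸 →L[ℂ] 𝔸`, applied to `b`.
Since `L_a` and `R_{-a}` commute, `exp ad_a = exp L_a * exp R_{-a}`, and comparing exponential
series gives `exp L_a = L_{exp a}` and `exp R_c = R_{exp c}`.
-/

open NormedSpace ContinuousLinearMap

section

variable {𝕜 𝔸 : Type*} [NontriviallyNormedField 𝕜] [NormedRing 𝔸] [NormedAlgebra 𝕜 𝔸]

theorem mul_pow_apply (a b : 𝔸) (n : ℕ) : (mul 𝕜 𝔸 a ^ n) b = a ^ n * b := by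
  rw [FunLike.coe_pow_eq_iterate]
  exact mul_left_iterate_apply a b

theorem flip_mul_pow_apply (a b : 𝔸) (n : ℕ) : ((mul 𝕜 𝔸).flip a ^ n) b = b * a ^ n := by
  rw [FunLike.coe_pow_eq_iterate]
  exact mul_right_iterate_apply a b

theorem commute_mul_flip_mul (a c : 𝔸) : Commute (mul 𝕜 𝔸 a) ((mul 𝕜 𝔸).flip c) :=
  ContinuousLinearMap.ext fun x => (mul_assoc a x c).symm

end

section

variable {𝕂 𝔸 : Type*} [RCLike 𝕂] [NormedRing 𝔸] [NormedAlgebra 𝕂 𝔸] [CompleteSpace 𝔸]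

theorem exp_apply_eq_of_pow_apply {E : Type*} [NormedAddCommGroup E] [NormedSpace 𝕂 E]
    [CompleteSpace E] {T : E →L[𝕂] E} {v : E} {a : 𝔸} (Φ : 𝔸 →L[𝕂] E)
    (h : ∀ n, (T ^ n) v = Φ (a ^ n)) : exp T v = Φ (exp a) := by
  have hT := (exp_series_hasSum_exp' (𝕂 := 𝕂) T).mapL (apply 𝕂 E v)
  have ha := (exp_series_hasSum_exp' (𝕂 := 𝕂) a).mapL Φ
  refine hT.unique (ha.congr_fun fun n => ?_)
  simp only [apply_apply, map_smul, h]

theorem exp_mul_apply (a b : 𝔸) : exp (mul 𝕂 𝔸 a) b = exp a * b :=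
  exp_apply_eq_of_pow_apply ((mul 𝕂 𝔸).flip b) (mul_pow_apply a b)

theorem exp_flip_mul_apply (a b : 𝔸) : exp ((mul 𝕂 𝔸).flip a) b = b * exp a :=
  exp_apply_eq_of_pow_apply (mul 𝕂 𝔸 b) (flip_mul_pow_apply a b)

theorem exp_mul_add_flip_mul_apply (a b c : 𝔸) :
    exp (mul 𝕂 𝔸 a + (mul 𝕂 𝔸).flip c) b = exp a * b * exp c := by
  -- instance search does not find the `ℚ`-algebra structure that `exp_add_of_commute` asks for
  let : NormedAlgebra ℚ (𝔸 →L[𝕂] 𝔸) := .restrictScalars ℚ 𝕂 _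
  rw [exp_add_of_commute (commute_mul_flip_mul a c), mul_apply_eq_comp, exp_flip_mul_apply,
    exp_mul_apply, mul_assoc]

end

/-- Baker–Campbell–Hausdorff conjugation formula:
`exp a * b * exp (-a) = ∑ (1/n!) • ad_a^[n] b`. -/
theorem stmt_6 {𝔸 : Type*} [NormedRing 𝔸] [NormedAlgebra ℂ 𝔸] [CompleteSpace 𝔸]
    (a b : 𝔸) :
    HasSum (fun n : ℕ => ((n.factorial : ℂ)⁻¹) • (fun x : 𝔸 => a * x - x * a)^[n] b)
      (NormedSpace.exp a * b * NormedSpace.exp (-a)) := by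
  set ad := mul ℂ 𝔸 a + (mul ℂ 𝔸).flip (-a)
  have coe_ad : ⇑ad = fun x : 𝔸 => a * x - x * a := by
    funext x
    simp [ad, sub_eq_add_neg]
  rw [← exp_mul_add_flip_mul_apply (𝕂 := ℂ), ← coe_ad]
  refine ((exp_series_hasSum_exp' (𝕂 := ℂ) ad).mapL (apply ℂ 𝔸 b)).congr_fun fun n => ?_
  simp only [apply_apply, smul_apply, FunLike.coe_pow_eq_iterate]
end

section
/- Under the hypotheses of the explicit-flow construction — f : ℝ → ℝ differentiable with derivative f', f x ≠ 0 for all x, F : ℝ → ℝ with HasDerivAt F (1/(f x)) x for all x, G a two-sided inverse of F, and φ(t) = G (F φ₀ + t) satisfying HasDerivAt φ (f (φ t)) t for all t — fix π₀ ∈ ℝ and define π : ℝ → ℝ by π(t) = π₀ · f(φ₀) / f(φ(t)). Then π(0) = π₀ and for every t, HasDerivAt π (−(π t) · f'(φ t)) t. (The momentum solution of the classical equations of motion for the Hamiltonian H = π f(φ) is π(t) = π₀ f(φ₀)/f(φ(t)).) -/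
/-- The momentum solution of Hamilton's equations for `H = π f(φ)` is
`π(t) = π₀ f(φ₀) / f(φ(t))`. -/
theorem stmt_9 (f f' : ℝ → ℝ) (hf : ∀ x, HasDerivAt f (f' x) x) (hf0 : ∀ x, f x ≠ 0)
    (F G : ℝ → ℝ) (hF : ∀ x, HasDerivAt F (1 / f x) x)
    (hGF : ∀ x, G (F x) = x) (hFG : ∀ y, F (G y) = y)
    (φ₀ : ℝ) (φ : ℝ → ℝ) (hφ : ∀ t, φ t = G (F φ₀ + t))
    (hφflow : ∀ t, HasDerivAt φ (f (φ t)) t)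
    (π₀ : ℝ) (π : ℝ → ℝ) (hπ : ∀ t, π t = π₀ * f φ₀ / f (φ t)) :
    π 0 = π₀ ∧ ∀ t, HasDerivAt π (-(π t) * f' (φ t)) t := by
  have hφ0 : φ 0 = φ₀ := by rw [hφ, add_zero, hGF]
  constructor
  · rw [hπ, hφ0, mul_div_assoc, div_self (hf0 φ₀), mul_one]
  · intro t
    have hcomp : HasDerivAt (fun s => f (φ s)) (f' (φ t) * f (φ t)) t :=
      (hf (φ t)).comp t (hφflow t)
    have h : HasDerivAt (fun s => π₀ * f φ₀ / f (φ s))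
        (-(π₀ * f φ₀) * (f' (φ t) * f (φ t)) / (f (φ t))^2) t := by
      simpa [div_eq_mul_inv, neg_mul, mul_assoc, mul_comm, mul_left_comm] using
        ((hcomp.inv (hf0 (φ t))).const_mul (π₀ * f φ₀))
    have heq : (fun s => π₀ * f φ₀ / f (φ s)) = π := by
      funext s; rw [hπ]
    rw [← heq]
    convert h using 1
    simp only []
    field_simp [hf0 (φ t)]
end

section
/- Let β > 0 and φ₀, π₀ ∈ ℝ. Define φ : ℝ → ℝ by φ(t) = (1/β) · log(exp(β·φ₀) + t) and π : ℝ → ℝ by π(t) = π₀ · (1 + t·exp(−β·φ₀)). Then for every t > −exp(β·φ₀): (i) HasDerivAt φ ((1/β)·exp(−β·φ(t))) t and HasDerivAt π (π(t)·exp(−β·φ(t))) t, i.e. (φ, π) solve Hamilton's equations for the Hamiltonian H = (1/β)·π·e^{−βφ}; (ii) φ(0) = φ₀ and π(0) = π₀; and (iii) at time t = 1, φ(1) = (1/β)·log(1 + exp(β·φ₀)) is the softplus of φ₀ with temperature β and π(1) = π₀·(1 + exp(−β·φ₀)). (Symplectic softplus: the time-1 Hamiltonian flow of H = β⁻¹ π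 e^{−βφ} implements (φ,π) ↦ (β⁻¹ log(1+e^{βφ}), π(1+e^{−βφ})).) -/
/-- Symplectic softplus: the time-1 Hamiltonian flow of `H = β⁻¹ π e^{-βφ}`
implements `(φ, π) ↦ (β⁻¹ log(1 + e^{βφ}), π (1 + e^{-βφ}))`. -/
theorem stmt_10 (β : ℝ) (hβ : 0 < β) (φ₀ π₀ : ℝ) (φ π : ℝ → ℝ)
    (hφ : ∀ t, φ t = (1 / β) * Real.log (Real.exp (β * φ₀) + t))
    (hπ : ∀ t, π t = π₀ * (1 + t * Real.exp (-β * φ₀))) :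
    (∀ t : ℝ, -Real.exp (β * φ₀) < t →
      HasDerivAt φ ((1 / β) * Real.exp (-β * φ t)) t ∧
      HasDerivAt π (π t * Real.exp (-β * φ t)) t) ∧
    φ 0 = φ₀ ∧ π 0 = π₀ ∧
    φ 1 = (1 / β) * Real.log (1 + Real.exp (β * φ₀)) ∧
    π 1 = π₀ * (1 + Real.exp (-β * φ₀)) := by
  have hβ' : β ≠ 0 := ne_of_gt hβ
  refine ⟨?_, ?_, ?_, ?_, ?_⟩
  · intro t ht
    have hpos : 0 < Real.exp (β * φ₀) + t := by linarith
    have hexp : Real.exp (-β * φ t) = (Real.exp (β * φ₀) + t)⁻¹ := by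
      rw [hφ t]
      rw [show -β * ((1 / β) * Real.log (Real.exp (β * φ₀) + t)) =
        -Real.log (Real.exp (β * φ₀) + t) by field_simp]
      rw [Real.exp_neg, Real.exp_log hpos]
    constructor
    · have h1 : HasDerivAt (fun t => Real.exp (β * φ₀) + t) 1 t :=
        (hasDerivAt_id t).const_add _
      have h2 : HasDerivAt (fun t => (1 / β) * Real.log (Real.exp (β * φ₀) + t))
          ((1 / β) * (1 / (Real.exp (β * φ₀) + t))) t := by
        have := (h1.log (ne_of_gt hpos)).const_mul (1 / β)
        simpa using this
      have heq : φ = fun s => (1 / β) * Real.log (Real.exp (β * φ₀) + s) := funext hφ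
      rw [hexp, heq]
      simpa [one_div] using h2
    · have h1 : HasDerivAt (fun t : ℝ => π₀ * (1 + t * Real.exp (-β * φ₀)))
          (π₀ * Real.exp (-β * φ₀)) t := by
        have := ((hasDerivAt_id t).mul_const (Real.exp (-β * φ₀))).const_add (1:ℝ)
        simpa using this.const_mul π₀
      have heq : π = fun s => π₀ * (1 + s * Real.exp (-β * φ₀)) := funext hπ
      rw [hexp, hπ t]
      have : π₀ * (1 + t * Real.exp (-β * φ₀)) * (Real.exp (β * φ₀) + t)⁻¹
          = π₀ * Real.exp (-β * φ₀) := by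
        have hE : Real.exp (-β * φ₀) = (Real.exp (β * φ₀))⁻¹ := by
          rw [← Real.exp_neg]; ring_nf
        rw [hE]
        field_simp
      rw [this, heq]; exact h1
  · rw [hφ 0]
    simp [Real.log_exp, mul_comm]
    field_simp
  · rw [hπ 0]; ring
  · rw [hφ 1]; rw [add_comm]
  · rw [hπ 1]; ring
end

section
/- Let 𝔸 be a complex Banach algebra with unit, let k : ℕ, and let a : Fin k → 𝔸 with sum H = ∑_i a i. For ε ∈ ℝ, let P(ε) = (exp(ε • a 0) * exp(ε • a 1) * ⋯ * exp(ε • a (k−1))) * (exp(ε • a (k−1)) * ⋯ * exp(ε • a 1) * exp(ε • a 0)) be the symmetrized ordered product (forward product times reversed product). Then there exist constants K > 0 and δ > 0 such that for all 0 < ε < δ, ‖P(ε) − exp((2ε) • H)‖ ≤ K·ε³. (Symmetric Trotter formula: the palindromic product of exponentials approximates e^{2εH} with third-order error, used to simulate the truncated nonlinearity Hamiltonian as a sequence of elementary gates.) -/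
/-!
Each factor satisfies `exp (ε • b) = 1 + ε • b + ε² • (b * b) / 2 + O(ε³)`, and such second-order
expansions multiply like truncated power series. Hence the ordered product over a list `L` has
expansion `1 + ε • L.sum + ε² • Q L` with `Q L = ∑ᵢ bᵢ²/2 + ∑_{i<j} bᵢ bⱼ`. The ε² coefficient of
the palindromic product is `Q L + S² + Q L.reverse`, where `S = L.sum`, and the identity
`Q L + Q L.reverse = S²` turns it into `2 S²`, the ε² coefficient of `exp (2ε • S)`; the two
sides therefore agree up to `O(ε³)`.
-/

open Asymptotics Filter Topology NormedSpace

theorem isBigO_smul_const_self {α 𝕜 E : Type*} [NormedField 𝕜] [SeminormedAddCommGroup E]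
    [NormedSpace 𝕜 E] {l : Filter α} (φ : α → 𝕜) (X : E) : (fun x => φ x • X) =O[l] φ :=
  isBigO_of_le' (c := ‖X‖) l fun x => by rw [norm_smul, mul_comm]

theorem Asymptotics.IsBigO.exists_pos_bound_pow {E : Type*} [SeminormedAddCommGroup E]
    {f : ℝ → E} {n : ℕ} (h : f =O[𝓝 0] fun ε => ε ^ n) :
    ∃ K > (0 : ℝ), ∃ δ > (0 : ℝ), ∀ ε : ℝ, 0 < ε → ε < δ → ‖f ε‖ ≤ K * ε ^ n := by
  obtain ⟨K, hK, hKf⟩ := h.exists_pos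
  obtain ⟨δ, hδ, hball⟩ := Metric.eventually_nhds_iff.1 hKf.bound
  refine ⟨K, hK, δ, hδ, fun ε hε hεδ => ?_⟩
  simpa [abs_of_pos hε] using hball (y := ε) (by simpa [abs_of_pos hε] using hεδ)

section HalfOrderedSquare

variable {R : Type*} [Ring R] [Algebra ℝ R]

noncomputable def halfOrderedSquare : List R → R
  | [] => 0
  | b :: L => (2 : ℝ)⁻¹ • (b * b) + b * L.sum + halfOrderedSquare L

theorem halfOrderedSquare_append (L₁ L₂ : List R) :
    halfOrderedSquare (L₁ ++ L₂) =
      halfOrderedSquare L₁ + L₁.sum * L₂.sum + halfOrderedSquare L₂ := by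
  induction L₁ with
  | nil => simp [halfOrderedSquare]
  | cons b L ih =>
    simp only [List.cons_append, halfOrderedSquare, ih, List.sum_cons, List.sum_append, add_mul,
      mul_add]
    abel

theorem halfOrderedSquare_add_reverse (L : List R) :
    halfOrderedSquare L + halfOrderedSquare L.reverse = L.sum * L.sum := by
  induction L with
  | nil => simp [halfOrderedSquare]
  | cons b L ih =>
    rw [List.reverse_cons, halfOrderedSquare_append]
    simp only [halfOrderedSquare, List.sum_cons, List.sum_reverse, List.sum_nil, mul_zero,
      add_zero]
    rw [add_mul, mul_add, mul_add, ← ih]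
    module

end HalfOrderedSquare

section SecondOrderExpansion

variable {𝔸 : Type*} [NormedRing 𝔸] [NormedAlgebra ℝ 𝔸]

def HasSecondOrderExpansion (f : ℝ → 𝔸) (A B : 𝔸) : Prop :=
  (fun ε : ℝ => f ε - (1 + ε • A + ε ^ 2 • B)) =O[𝓝 0] fun ε => ε ^ 3

namespace HasSecondOrderExpansion

variable {f g : ℝ → 𝔸} {A B A' B' : 𝔸}

theorem tendsto (hf : HasSecondOrderExpansion f A B) : Tendsto f (𝓝 0) (𝓝 1) := by
  have hpoly : Tendsto (fun ε : ℝ => 1 + ε • A + ε ^ 2 • B) (𝓝 0) (𝓝 1) := by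
    have : Continuous fun ε : ℝ => 1 + ε • A + ε ^ 2 • B := by fun_prop
    simpa using this.tendsto 0
  have hrem := hf.trans_tendsto (by simpa using (continuous_pow 3).tendsto (0 : ℝ))
  simpa using hrem.add hpoly

theorem sub_isBigO (hf : HasSecondOrderExpansion f A B) (hg : HasSecondOrderExpansion g A B) :
    (fun ε => f ε - g ε) =O[𝓝 0] fun ε => ε ^ 3 := by
  simpa using hf.sub hg

theorem mul (hf : HasSecondOrderExpansion f A B) (hg : HasSecondOrderExpansion g A' B') :
    HasSecondOrderExpansion (fun ε => f ε * g ε) (A + A') (B + A * A' + B') := by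
  set p : ℝ → 𝔸 := fun ε => 1 + ε • A + ε ^ 2 • B
  set q : ℝ → 𝔸 := fun ε => 1 + ε • A' + ε ^ 2 • B'
  have hp : p =O[𝓝 0] fun _ => (1 : ℝ) := by
    have : Continuous p := by fun_prop
    simpa [p] using (this.tendsto 0).isBigO_one ℝ
  have hcubic : (fun ε : ℝ => ε ^ 3 • (A * B' + B * A') + ε ^ 4 • (B * B'))
      =O[𝓝 0] fun ε => ε ^ 3 :=
    (isBigO_smul_const_self _ _).add
      ((isBigO_smul_const_self _ _).trans (isLittleO_pow_pow (by norm_num : 3 < 4)).isBigO)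
  have hsplit : ∀ ε, f ε * g ε - (1 + ε • (A + A') + ε ^ 2 • (B + A * A' + B'))
      = (f ε - p ε) * g ε + p ε * (g ε - q ε)
        + (ε ^ 3 • (A * B' + B * A') + ε ^ 4 • (B * B')) := by
    intro ε
    simp only [p, q, mul_add, add_mul, one_mul, mul_one, smul_mul_assoc,
      mul_smul_comm, smul_smul, smul_add, sub_mul, mul_sub]
    module
  have hfg : (fun ε => (f ε - p ε) * g ε) =O[𝓝 0] fun ε => ε ^ 3 := by
    simpa using IsBigO.mul hf (hg.tendsto.isBigO_one ℝ)
  have hpg : (fun ε => p ε * (g ε - q ε)) =O[𝓝 0] fun ε => ε ^ 3 := by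
    simpa using hp.mul hg
  simpa only [HasSecondOrderExpansion, hsplit] using (hfg.add hpg).add hcubic

end HasSecondOrderExpansion

theorem hasSecondOrderExpansion_exp [CompleteSpace 𝔸] (x : 𝔸) :
    HasSecondOrderExpansion (fun ε : ℝ => exp (ε • x)) x ((2 : ℝ)⁻¹ • (x * x)) := by
  have htaylor := (exp_hasFPowerSeriesAt_zero (𝕂 := ℝ) (𝔸 := 𝔸)).isBigO_sub_partialSum_pow 3
  have hx : Tendsto (fun ε : ℝ => ε • x) (𝓝 0) (𝓝 0) := by
    simpa using (tendsto_id (x := 𝓝 (0 : ℝ))).smul_const x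
  have hnorm : (fun ε : ℝ => ‖ε • x‖ ^ 3) =O[𝓝 0] fun ε => ε ^ 3 :=
    isBigO_of_le' (c := ‖x‖ ^ 3) _ fun ε => by simp [norm_smul, mul_pow, mul_comm]
  have hpartial : ∀ ε : ℝ, (expSeries ℝ 𝔸).partialSum 3 (ε • x)
      = 1 + ε • x + ε ^ 2 • ((2 : ℝ)⁻¹ • (x * x)) := by
    intro ε
    simp [FormalMultilinearSeries.partialSum, Finset.sum_range_succ, expSeries_apply_eq, smul_pow,
      pow_two, smul_smul, Nat.factorial, mul_comm]
  simpa [HasSecondOrderExpansion, Function.comp_def, hpartial] using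
    (htaylor.comp_tendsto hx).trans hnorm

theorem hasSecondOrderExpansion_prod_exp [CompleteSpace 𝔸] (L : List 𝔸) :
    HasSecondOrderExpansion (fun ε : ℝ => (L.map fun b => exp (ε • b)).prod) L.sum
      (halfOrderedSquare L) := by
  induction L with
  | nil => simpa [HasSecondOrderExpansion, halfOrderedSquare] using isBigO_zero _ _
  | cons b L ih => simpa [halfOrderedSquare] using (hasSecondOrderExpansion_exp b).mul ih

end SecondOrderExpansion

/-- Symmetric (palindromic) Trotter formula: the forward-times-reversed product of
exponentials approximates `exp (2ε • H)` with third-order error. -/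
theorem stmt_18 {𝔸 : Type*} [NormedRing 𝔸] [NormedAlgebra ℂ 𝔸] [CompleteSpace 𝔸]
    (k : ℕ) (a : Fin k → 𝔸) (H : 𝔸) (hH : H = ∑ i, a i)
    (P : ℝ → 𝔸)
    (hP : ∀ ε : ℝ, P ε =
      (List.ofFn fun i : Fin k => NormedSpace.exp (ε • a i)).prod *
      (List.ofFn fun i : Fin k => NormedSpace.exp (ε • a i)).reverse.prod) :
    ∃ K > (0 : ℝ), ∃ δ > (0 : ℝ), ∀ ε : ℝ, 0 < ε → ε < δ →
      ‖P ε - NormedSpace.exp ((2 * ε) • H)‖ ≤ K * ε ^ 3 := by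
  set L := List.ofFn a
  have hsum : L.sum = H := by rw [List.sum_ofFn, hH]
  have hPL : P = fun ε : ℝ => (L.map fun b => exp (ε • b)).prod *
      (L.reverse.map fun b => exp (ε • b)).prod := by
    funext ε
    rw [hP, List.map_reverse, List.map_ofFn]
    rfl
  have hPexp : HasSecondOrderExpansion P (H + H)
      (halfOrderedSquare L + H * H + halfOrderedSquare L.reverse) := by
    simpa [hPL, hsum] using
      (hasSecondOrderExpansion_prod_exp L).mul (hasSecondOrderExpansion_prod_exp L.reverse)
  have hexp : HasSecondOrderExpansion (fun ε : ℝ => exp ((2 * ε) • H)) (H + H)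
      (halfOrderedSquare L + H * H + halfOrderedSquare L.reverse) := by
    have hcoeff : halfOrderedSquare L + H * H + halfOrderedSquare L.reverse
        = (2 : ℝ)⁻¹ • ((2 : ℝ) • H * (2 : ℝ) • H) := by
      rw [add_right_comm, halfOrderedSquare_add_reverse, hsum, smul_mul_smul_comm]
      module
    have hfun : (fun ε : ℝ => exp ((2 * ε) • H)) = fun ε => exp (ε • (2 : ℝ) • H) := by
      simp_rw [smul_smul, mul_comm]
    rw [hfun, hcoeff, ← two_smul ℝ H]
    exact hasSecondOrderExpansion_exp _
  exact (hPexp.sub_isBigO hexp).exists_pos_bound_pow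
end
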